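/- arXiv:1708.09468 — 4 statements merged into one kernel-verified Lean document; each statement's English description precedes it below -/
import Mathlib

section
/- For every integer d ≥ 2 there exists a constant c_d > 0, depending only on d, such that for every integer n1 ≥ 1 with n = n1^d, inf_{θ̃} sup_{θ0 ∈ M(L_{d,n}) ∩ B∞(1)} n^{-1} E‖θ̃(Y) − θ0‖₂² ≥ c_d n^{-1/d}, where the infimum is over all estimators θ̃, i.e. all measurable maps θ̃ : ℝ^{L_{d,n}} → ℝ^{L_{d,n}} applied to the data Y. -/
open MeasureTheory ProbabilityTheory
open scoped ENNReal NNReal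

noncomputable section

/-- The monotone cone `M(L_{d,n})` on the lattice `{1,...,n1}^d`, ordered coordinatewise. -/
def monotoneCone (d n1 : ℕ) : Set ((Fin d → Fin n1) → ℝ) :=
  {θ | ∀ x y : Fin d → Fin n1, x ≤ y → θ x ≤ θ y}

/-- i.i.d. standard Gaussian noise indexed by `ι`. -/
def gaussPi (ι : Type) [Fintype ι] : Measure (ι → ℝ) :=
  Measure.pi fun _ => gaussianReal 0 1

/-- The risk `R(θ̃,θ0) = n⁻¹ E‖θ̃(θ0+ε) − θ0‖₂²` of an arbitrary estimator `θ̃`. -/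
def riskOf (d n1 : ℕ) (est : ((Fin d → Fin n1) → ℝ) → ((Fin d → Fin n1) → ℝ))
    (θ0 : (Fin d → Fin n1) → ℝ) : ℝ≥0∞ :=
  ((n1 ^ d : ℕ) : ℝ≥0∞)⁻¹ *
    ∫⁻ ε, ENNReal.ofReal (∑ w, (est (θ0 + ε) w - θ0 w) ^ 2) ∂(gaussPi (Fin d → Fin n1))

/-! Assouad's method. For a suitable `s`, the level set `{x | ∑ⱼ xⱼ = s}` is an antichain with at
least `n / (d n₁)` points, so every sign pattern `σ` on it gives a monotone signal in `B∞(1)`: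
`-1` below the level, `σ` on it, `+1` above. Two signals differing in one sign differ by `2` at a
single point, and since the `N(±1, 1)` densities are both at least `κ = e⁻² / √(2π)` on `[-1, 1]`,
no estimator has total squared error below `4κ` at that point under both. Averaging over the
hypercube, some signal has risk at least `2κ · #level / n ≥ (2κ / d) n^{-1/d}`. -/

open Function Finset Real

def gaussMinDensity : ℝ := (√(2 * π))⁻¹ * exp (-2)

lemma gaussMinDensity_pos : 0 < gaussMinDensity := by
  unfold gaussMinDensity
  have := pi_pos
  positivity

lemma gaussMinDensity_le_gaussianPDFReal {c u : ℝ} (h : |u - c| ≤ 2) :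
    gaussMinDensity ≤ gaussianPDFReal c 1 u := by
  rw [gaussianPDFReal, gaussMinDensity, NNReal.coe_one, mul_one, mul_one]
  gcongr
  nlinarith [sq_abs (u - c), abs_nonneg (u - c)]

lemma ofReal_gaussMinDensity_mul_setLIntegral_le {c : ℝ} (hc : |c| ≤ 1) {F : ℝ → ℝ≥0∞}
    (hF : Measurable F) :
    ENNReal.ofReal gaussMinDensity * ∫⁻ u in Set.Icc (-1 : ℝ) 1, F u ≤
      ∫⁻ u, F u ∂gaussianReal c 1 := by
  rw [gaussianReal_of_var_ne_zero c one_ne_zero,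
    lintegral_withDensity_eq_lintegral_mul _ (measurable_gaussianPDF c 1) hF,
    ← lintegral_const_mul _ hF]
  refine (setLIntegral_mono ((measurable_gaussianPDF c 1).mul hF) fun u hu => ?_).trans
    (setLIntegral_le_lintegral _ _)
  refine mul_le_mul_left (ENNReal.ofReal_le_ofReal ?_) _
  refine gaussMinDensity_le_gaussianPDFReal ?_
  obtain ⟨hu₁, hu₂⟩ := hu
  rw [abs_le] at hc ⊢
  constructor <;> linarith

/-- Le Cam's two-point bound for the Gaussian location family at `±1`. -/
lemma ofReal_four_mul_gaussMinDensity_le {q : ℝ → ℝ} (hq : Measurable q) :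
    ENNReal.ofReal (4 * gaussMinDensity) ≤
      (∫⁻ u, ENNReal.ofReal ((q u - 1) ^ 2) ∂gaussianReal 1 1) +
        ∫⁻ u, ENNReal.ofReal ((q u + 1) ^ 2) ∂gaussianReal (-1) 1 := by
  have hF₁ : Measurable fun u => ENNReal.ofReal ((q u - 1) ^ 2) := by fun_prop
  have hF₂ : Measurable fun u => ENNReal.ofReal ((q u + 1) ^ 2) := by fun_prop
  calc ENNReal.ofReal (4 * gaussMinDensity)
      = ENNReal.ofReal gaussMinDensity * ∫⁻ _ in Set.Icc (-1 : ℝ) 1, ENNReal.ofReal 2 := by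
        rw [setLIntegral_const, volume_Icc, ← ENNReal.ofReal_mul zero_le_two,
          ← ENNReal.ofReal_mul gaussMinDensity_pos.le]
        norm_num [mul_comm]
    _ ≤ ENNReal.ofReal gaussMinDensity * ∫⁻ u in Set.Icc (-1 : ℝ) 1,
          (ENNReal.ofReal ((q u - 1) ^ 2) + ENNReal.ofReal ((q u + 1) ^ 2)) := by
        gcongr with u
        rw [← ENNReal.ofReal_add (sq_nonneg _) (sq_nonneg _)]
        exact ENNReal.ofReal_le_ofReal (by nlinarith [sq_nonneg (q u)])
    _ ≤ _ := by
        rw [lintegral_add_left hF₁, mul_add]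
        exact add_le_add (ofReal_gaussMinDensity_mul_setLIntegral_le (by norm_num) hF₁)
          (ofReal_gaussMinDensity_mul_setLIntegral_le (by norm_num) hF₂)

lemma lintegral_gaussianReal_comp_const_add (c : ℝ) {F : ℝ → ℝ≥0∞} (hF : Measurable F) :
    ∫⁻ t, F (c + t) ∂gaussianReal 0 1 = ∫⁻ u, F u ∂gaussianReal c 1 := by
  rw [← lintegral_map hF (measurable_const_add c), gaussianReal_map_const_add, zero_add]

lemma le_lintegral_pi_of_le_lintegral_update {ι : Type*} [Fintype ι] [DecidableEq ι]
    {X : ι → Type*} [∀ i, MeasurableSpace (X i)] {μ : ∀ i, Measure (X i)}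
    [∀ i, IsProbabilityMeasure (μ i)] {f : (∀ i, X i) → ℝ≥0∞} (hf : Measurable f) (a : ι)
    {c : ℝ≥0∞} (h : ∀ x, c ≤ ∫⁻ t, f (update x a t) ∂μ a) :
    c ≤ ∫⁻ x, f x ∂Measure.pi μ := by
  have : ∀ i, Nonempty (X i) := fun i => nonempty_of_isProbabilityMeasure (μ i)
  let x₀ : ∀ i, X i := fun i => Classical.arbitrary _
  rw [lintegral_eq_lmarginal_univ x₀, lmarginal_erase' _ hf (mem_univ a), lmarginal]
  calc c = ∫⁻ _, c ∂Measure.pi fun i : ↥(univ.erase a) => μ i := by simp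
    _ ≤ _ := lintegral_mono fun _ => h _

lemma update_add_eq_update_add_update {ι : Type*} [DecidableEq ι] {θ x : ι → ℝ} (a : ι) (t : ℝ) :
    θ + update x a t = update (θ + x) a (θ a + t) := by
  rw [update_add, update_eq_self]

section CoordRisk

variable {ι : Type} [Fintype ι]

def coordRisk (est : (ι → ℝ) → ι → ℝ) (θ : ι → ℝ) (a : ι) : ℝ≥0∞ :=
  ∫⁻ ε, ENNReal.ofReal ((est (θ + ε) a - θ a) ^ 2) ∂gaussPi ι

lemma riskOf_eq_sum_coordRisk {d n1 : ℕ} {est : ((Fin d → Fin n1) → ℝ) → (Fin d → Fin n1) → ℝ}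
    (hest : Measurable est) (θ : (Fin d → Fin n1) → ℝ) :
    riskOf d n1 est θ = ((n1 ^ d : ℕ) : ℝ≥0∞)⁻¹ * ∑ a, coordRisk est θ a := by
  simp only [riskOf, coordRisk]
  rw [← lintegral_finsetSum _ fun a _ => by fun_prop]
  simp_rw [ENNReal.ofReal_sum_of_nonneg fun _ _ => sq_nonneg _]

/-- Integrating out every coordinate but `a` reduces the sum of the two risks at `a` to the
one-dimensional two-point bound, with `q u` the estimate at `a` when the data at `a` is `u`. -/
lemma ofReal_four_mul_gaussMinDensity_le_coordRisk_add [DecidableEq ι]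
    {est : (ι → ℝ) → ι → ℝ} (hest : Measurable est) {θ θ' : ι → ℝ} {a : ι}
    (hoff : ∀ w ≠ a, θ w = θ' w) (hθ : θ a = 1) (hθ' : θ' a = -1) :
    ENNReal.ofReal (4 * gaussMinDensity) ≤ coordRisk est θ a + coordRisk est θ' a := by
  rw [coordRisk, coordRisk, ← lintegral_add_left (by fun_prop)]
  refine le_lintegral_pi_of_le_lintegral_update (by fun_prop) a fun x => ?_
  set q : ℝ → ℝ := fun u => est (update (θ + x) a u) a
  have hq : Measurable q := by fun_prop
  have hθθ' : update (θ' + x) a = update (θ + x) a := by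
    funext u w
    rcases eq_or_ne w a with rfl | hw
    · simp
    · simp [update_of_ne hw, hoff w hw]
  have hslice : ∀ (η : ι → ℝ), update (η + x) a = update (θ + x) a →
      ∫⁻ t, ENNReal.ofReal ((est (η + update x a t) a - η a) ^ 2) ∂gaussianReal 0 1 =
        ∫⁻ u, ENNReal.ofReal ((q u - η a) ^ 2) ∂gaussianReal (η a) 1 := by
    intro η hη
    rw [← lintegral_gaussianReal_comp_const_add (η a) (by fun_prop)]
    refine lintegral_congr fun t => ?_
    rw [update_add_eq_update_add_update, hη]
  rw [lintegral_add_left (by fun_prop), hslice θ rfl, hslice θ' hθθ', hθ, hθ']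
  simp only [sub_neg_eq_add]
  exact ofReal_four_mul_gaussMinDensity_le hq

end CoordRisk

lemma card_mul_le_sum_of_le_add_apply {β : Type*} [Fintype β] {τ : β → β}
    (hτ : Involutive τ) {f : β → ℝ≥0∞} {c : ℝ≥0∞} (h : ∀ b, 2 * c ≤ f b + f (τ b)) :
    Fintype.card β * c ≤ ∑ b, f b := by
  have hsum : 2 * (Fintype.card β * c) ≤ 2 * ∑ b, f b := by
    calc 2 * (Fintype.card β * c) = ∑ _b : β, 2 * c := by
          rw [sum_const, card_univ, nsmul_eq_mul]; ring
      _ ≤ ∑ b, (f b + f (τ b)) := sum_le_sum fun b _ => h b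
      _ = 2 * ∑ b, f b := by
          rw [sum_add_distrib, hτ.bijective.sum_comp f, two_mul]
  exact (ENNReal.mul_le_mul_iff_right two_ne_zero ENNReal.ofNat_ne_top).mp hsum

section LevelSignal

variable {α : Type} (r : α → ℕ) (s : ℕ)

def levelSignal (σ : α → Bool) (x : α) : ℝ :=
  if r x < s then -1 else if r x = s then (if σ x then 1 else -1) else 1

variable {r s}

lemma abs_levelSignal_le_one (σ : α → Bool) (x : α) : |levelSignal r s σ x| ≤ 1 := by
  unfold levelSignal; split_ifs <;> norm_num

lemma levelSignal_monotone [PartialOrder α] (hr : StrictMono r) (σ : α → Bool) :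
    Monotone (levelSignal r s σ) := by
  intro x y hxy
  rcases hxy.eq_or_lt with rfl | hlt
  · exact le_rfl
  have hrxy := hr hlt
  by_cases hx : r x < s
  · rw [levelSignal, if_pos hx]
    exact (abs_le.mp (abs_levelSignal_le_one σ y)).1
  · have hy : levelSignal r s σ y = 1 := by
      rw [levelSignal, if_neg (by omega), if_neg (by omega)]
    rw [hy]
    exact (abs_le.mp (abs_levelSignal_le_one σ x)).2

lemma levelSignal_of_eq {σ : α → Bool} {a : α} (ha : r a = s) :
    levelSignal r s σ a = if σ a then 1 else -1 := by
  rw [levelSignal, if_neg (by omega), if_pos ha]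

variable [Fintype α] [DecidableEq α]

/-- Assouad's lemma on the hypercube of level signals: flipping the sign at a point `a` of the
level set changes the signal only at `a`, by `2`. -/
lemma card_mul_le_sum_coordRisk_levelSignal {est : (α → ℝ) → α → ℝ} (hest : Measurable est)
    {a : α} (ha : r a = s) :
    Fintype.card (α → Bool) * ENNReal.ofReal (2 * gaussMinDensity) ≤
      ∑ σ, coordRisk est (levelSignal r s σ) a := by
  let flip : (α → Bool) → α → Bool := fun σ => update σ a (!σ a)
  have hflip : Involutive flip := fun σ => by simp [flip]
  refine card_mul_le_sum_of_le_add_apply hflip fun σ => ?_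
  have hoff : ∀ w ≠ a, levelSignal r s σ w = levelSignal r s (flip σ) w := fun w hw => by
    simp only [levelSignal, flip, update_of_ne hw]
  rw [← ENNReal.ofReal_ofNat 2, ← ENNReal.ofReal_mul zero_le_two, ← mul_assoc]
  norm_num only
  cases hσ : σ a
  · rw [add_comm]
    exact ofReal_four_mul_gaussMinDensity_le_coordRisk_add hest (fun w hw => (hoff w hw).symm)
      (by simp [levelSignal_of_eq ha, flip, hσ]) (by simp [levelSignal_of_eq ha, hσ])
  · exact ofReal_four_mul_gaussMinDensity_le_coordRisk_add hest hoff
      (by simp [levelSignal_of_eq ha, hσ]) (by simp [levelSignal_of_eq ha, flip, hσ])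

end LevelSignal

section Lattice

variable {d n1 : ℕ}

def latticeRank (x : Fin d → Fin n1) : ℕ := ∑ j, (x j : ℕ)

lemma strictMono_latticeRank : StrictMono (latticeRank (d := d) (n1 := n1)) := by
  intro x y hxy
  obtain ⟨hle, j, hj⟩ := Pi.lt_def.mp hxy
  exact sum_lt_sum (fun i _ => hle i) ⟨j, mem_univ j, hj⟩

lemma exists_card_latticeRank_eq_ge (hd : d ≠ 0) (hn1 : n1 ≠ 0) :
    ∃ s, (n1 : ℝ) ^ d / (d * n1) ≤ #{x : Fin d → Fin n1 | latticeRank x = s} := by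
  have hmaps : ∀ x ∈ (univ : Finset (Fin d → Fin n1)), latticeRank x ∈ range (d * n1) := by
    intro x _
    rw [mem_range]
    have : Nonempty (Fin d) := ⟨⟨0, Nat.pos_of_ne_zero hd⟩⟩
    calc latticeRank x < ∑ _j : Fin d, n1 :=
          sum_lt_sum_of_nonempty univ_nonempty fun j _ => (x j).isLt
      _ = d * n1 := by simp
  obtain ⟨s, -, hs⟩ := exists_le_card_fiber_of_nsmul_le_card_of_maps_to hmaps
    (nonempty_range_iff.mpr (Nat.mul_ne_zero hd hn1)) (b := (n1 : ℝ) ^ d / (d * n1)) (by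
      rw [card_range, card_univ, Fintype.card_fun, Fintype.card_fin, Fintype.card_fin,
        nsmul_eq_mul, Nat.cast_mul, mul_div_cancel₀ _ (by positivity), Nat.cast_pow])
  exact ⟨s, hs⟩

/-- The minimax risk is at least the average risk over the hypercube of level signals on the
level set `s`. -/
lemma card_level_mul_le_iSup_riskOf {est : ((Fin d → Fin n1) → ℝ) → (Fin d → Fin n1) → ℝ}
    (hest : Measurable est) (s : ℕ) :
    ((n1 ^ d : ℕ) : ℝ≥0∞)⁻¹ * (#{x : Fin d → Fin n1 | latticeRank x = s} *
        ENNReal.ofReal (2 * gaussMinDensity)) ≤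
      ⨆ θ0 ∈ monotoneCone d n1, ⨆ _ : ∀ w, |θ0 w| ≤ 1, riskOf d n1 est θ0 := by
  set A := ({x : Fin d → Fin n1 | latticeRank x = s} : Finset _)
  set N := Fintype.card ((Fin d → Fin n1) → Bool)
  set θ := levelSignal latticeRank s
  have hrisk : ∀ σ, riskOf d n1 est (θ σ) ≤
      ⨆ θ0 ∈ monotoneCone d n1, ⨆ _ : ∀ w, |θ0 w| ≤ 1, riskOf d n1 est θ0 := fun σ =>
    le_iSup₂_of_le (θ σ) (fun x y hxy => levelSignal_monotone strictMono_latticeRank σ hxy) <|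
      le_iSup_of_le (abs_levelSignal_le_one σ) le_rfl
  refine (ENNReal.mul_le_mul_iff_right (a := (N : ℝ≥0∞)) (Nat.cast_ne_zero.mpr
    Fintype.card_ne_zero) (ENNReal.natCast_ne_top N)).mp ?_
  calc (N : ℝ≥0∞) * (((n1 ^ d : ℕ) : ℝ≥0∞)⁻¹ * (#A * ENNReal.ofReal (2 * gaussMinDensity)))
      = ((n1 ^ d : ℕ) : ℝ≥0∞)⁻¹ * ∑ _a ∈ A, N * ENNReal.ofReal (2 * gaussMinDensity) := by
        rw [sum_const, nsmul_eq_mul]; ring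
    _ ≤ ((n1 ^ d : ℕ) : ℝ≥0∞)⁻¹ * ∑ a ∈ A, ∑ σ, coordRisk est (θ σ) a := by
        gcongr with a ha
        exact card_mul_le_sum_coordRisk_levelSignal hest (mem_filter.mp ha).2
    _ ≤ ((n1 ^ d : ℕ) : ℝ≥0∞)⁻¹ * ∑ a, ∑ σ, coordRisk est (θ σ) a := by
        gcongr
        exact subset_univ A
    _ = ∑ σ, riskOf d n1 est (θ σ) := by
        simp_rw [riskOf_eq_sum_coordRisk hest, ← mul_sum]
        rw [sum_comm]
    _ ≤ ∑ _σ : (Fin d → Fin n1) → Bool,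
          ⨆ θ0 ∈ monotoneCone d n1, ⨆ _ : ∀ w, |θ0 w| ≤ 1, riskOf d n1 est θ0 :=
        sum_le_sum fun σ _ => hrisk σ
    _ = N * ⨆ θ0 ∈ monotoneCone d n1, ⨆ _ : ∀ w, |θ0 w| ≤ 1, riskOf d n1 est θ0 := by
        rw [sum_const, card_univ, nsmul_eq_mul]

end Lattice

/-- for every `d ≥ 2` there is `c_d > 0` such that for every `n1 ≥ 1` with
`n = n1 ^ d`, every measurable estimator `θ̃` satisfies
`sup_{θ0 ∈ M(L_{d,n}) ∩ B∞(1)} R(θ̃,θ0) ≥ c_d n^{-1/d}`. -/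
theorem stmt1 :
    ∀ d : ℕ, 2 ≤ d → ∃ c : ℝ, 0 < c ∧ ∀ n1 : ℕ, 1 ≤ n1 →
      ∀ est : ((Fin d → Fin n1) → ℝ) → ((Fin d → Fin n1) → ℝ), Measurable est →
        ENNReal.ofReal (c * ((n1 ^ d : ℕ) : ℝ) ^ (-(1 : ℝ) / d)) ≤
          ⨆ θ0 ∈ monotoneCone d n1, ⨆ _ : ∀ w, |θ0 w| ≤ 1, riskOf d n1 est θ0 := by
  intro d hd
  have hκ := gaussMinDensity_pos
  refine ⟨2 * gaussMinDensity / d, by positivity, fun n1 hn1 est hest => ?_⟩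
  obtain ⟨s, hs⟩ := exists_card_latticeRank_eq_ge (d := d) (n1 := n1) (by omega) (by omega)
  refine le_trans ?_ (card_level_mul_le_iSup_riskOf hest s)
  have hn1 : (0 : ℝ) < n1 := by exact_mod_cast hn1
  have hrate : ((n1 ^ d : ℕ) : ℝ) ^ (-(1 : ℝ) / d) = (n1 : ℝ)⁻¹ := by
    rw [neg_div, rpow_neg (by positivity), one_div, Nat.cast_pow,
      pow_rpow_inv_natCast hn1.le (by omega)]
  rw [hrate, ← ENNReal.ofReal_natCast, ← ENNReal.ofReal_inv_of_pos (by positivity),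
    ← ENNReal.ofReal_natCast, ← ENNReal.ofReal_mul (by positivity),
    ← ENNReal.ofReal_mul (by positivity)]
  refine ENNReal.ofReal_le_ofReal ?_
  calc 2 * gaussMinDensity / d * (n1 : ℝ)⁻¹
      = ((n1 ^ d : ℕ) : ℝ)⁻¹ * ((n1 : ℝ) ^ d / (d * n1) * (2 * gaussMinDensity)) := by
        push_cast
        field_simp
    _ ≤ _ := by gcongr

end
end

section
/- Let d ≥ 1 and suppose n1 = n^{1/d} is a positive integer. For a bounded block increasing function f ∈ F_d, define f_L(x_1,...,x_d) := f(⌊n1 x_1⌋/n1, ..., ⌊n1 x_d⌋/n1) and f_U(x_1,...,x_d) := f(⌈n1 x_1⌉/n1, ..., ⌈n1 x_d⌉/n1). Then ∫_{[0,1]^d} (f_U − f_L)² dx ≤ 4 d n^{−1/d} ‖f‖∞², where ‖f‖∞ = sup_{x ∈ [0,1]^d} |f(x)| and the integral is with respect to Lebesgue measure. -/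
/-!
Round up one coordinate at a time: with `corner n k x` the grid point of the cell of `x` rounded
up in the first `k` coordinates and down in the others, `f_U - f_L` telescopes into `d`
nonnegative increments. Integrating out the coordinate that moves, an increment becomes a
one-dimensional telescoping sum of a monotone function over the `n` cells of `[0,1]`, so it has
integral at most `(f 1 - f 0) / n`. Since `0 ≤ f_U - f_L ≤ f 1 - f 0 ≤ 2 M`, squaring costs a
factor `f 1 - f 0`, and `(n ^ d) ^ (-1 / d) = 1 / n`.
-/

open MeasureTheory
open scoped ENNReal NNReal

noncomputable section

/-- The unit cube `[0,1]^d`. -/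
def cube (d : ℕ) : Set (Fin d → ℝ) := Set.univ.pi fun _ => Set.Icc (0 : ℝ) 1

/-- Block increasing functions on `[0,1]^d` (the class `F_d`). -/
def BlockInc (d : ℕ) (f : (Fin d → ℝ) → ℝ) : Prop :=
  ∀ x y : Fin d → ℝ, x ∈ cube d → y ∈ cube d → x ≤ y → f x ≤ f y

open Set

theorem lintegral_pi_le_of_lintegral_update_le {ι : Type*} [Fintype ι] [DecidableEq ι]
    {X : ι → Type*} [∀ i, MeasurableSpace (X i)] {μ : ∀ i, Measure (X i)}
    [∀ i, IsProbabilityMeasure (μ i)] {F : (∀ i, X i) → ℝ≥0∞} (hF : Measurable F) (i : ι)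
    {C : ℝ≥0∞} (hC : ∀ x, ∫⁻ t, F (Function.update x i t) ∂μ i ≤ C) :
    ∫⁻ x, F x ∂Measure.pi μ ≤ C := by
  rcases isEmpty_or_nonempty (∀ i, X i) with _ | ⟨⟨x₀⟩⟩
  · simp
  calc ∫⁻ x, F x ∂Measure.pi μ
      = (∫⋯∫⁻_Finset.univ.erase i, fun x ↦ ∫⁻ t, F (Function.update x i t) ∂μ i ∂μ) x₀ := by
        rw [lintegral_eq_lmarginal_univ x₀, lmarginal_erase' _ hF (Finset.mem_univ i)]
    _ ≤ (∫⋯∫⁻_Finset.univ.erase i, fun _ ↦ C ∂μ) x₀ := lmarginal_mono hC x₀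
    _ = C := by simp [lmarginal]

theorem ENNReal.ofReal_sub_eq_sum_range_ofReal_sub {a : ℕ → ℝ} (ha : Monotone a) (m : ℕ) :
    ENNReal.ofReal (a m - a 0) = ∑ k ∈ Finset.range m, ENNReal.ofReal (a (k + 1) - a k) := by
  rw [← Finset.sum_range_sub,
    ENNReal.ofReal_sum_of_nonneg fun k _ ↦ sub_nonneg.2 (ha k.le_succ)]

theorem natCast_mul_rpow_neg_one_div (d n : ℕ) :
    (d : ℝ) * ((n ^ d : ℕ) : ℝ) ^ (-(1 : ℝ) / d) = d / n := by
  rcases eq_or_ne d 0 with rfl | hd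
  · simp
  rw [Nat.cast_pow, ← Real.rpow_natCast, ← Real.rpow_mul n.cast_nonneg,
    mul_div_cancel₀ _ (Nat.cast_ne_zero.2 hd), Real.rpow_neg_one, div_eq_mul_inv]

instance : IsProbabilityMeasure (volume.restrict (Icc (0 : ℝ) 1)) :=
  ⟨by simp⟩

theorem volume_restrict_cube (d : ℕ) :
    volume.restrict (cube d) = Measure.pi fun _ ↦ volume.restrict (Icc (0 : ℝ) 1) := by
  rw [cube, volume_pi, Measure.restrict_pi_pi]

theorem zero_mem_cube (d : ℕ) : (0 : Fin d → ℝ) ∈ cube d :=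
  fun _ _ ↦ ⟨le_rfl, zero_le_one⟩

theorem one_mem_cube (d : ℕ) : (1 : Fin d → ℝ) ∈ cube d :=
  fun _ _ ↦ ⟨zero_le_one, le_rfl⟩

theorem update_mem_cube {d : ℕ} {x : Fin d → ℝ} (hx : x ∈ cube d) (i : Fin d) {t : ℝ}
    (ht : t ∈ Icc 0 1) : Function.update x i t ∈ cube d := by
  intro j _
  rcases eq_or_ne j i with rfl | hj
  · simpa
  · simpa [hj] using hx j (mem_univ j)

namespace BlockInc

variable {d : ℕ} {f : (Fin d → ℝ) → ℝ}

theorem apply_zero_le (hf : BlockInc d f) {x : Fin d → ℝ} (hx : x ∈ cube d) : f 0 ≤ f x :=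
  hf _ _ (zero_mem_cube d) hx fun i ↦ (hx i (mem_univ i)).1

theorem apply_le_apply_one (hf : BlockInc d f) {x : Fin d → ℝ} (hx : x ∈ cube d) : f x ≤ f 1 :=
  hf _ _ hx (one_mem_cube d) fun i ↦ (hx i (mem_univ i)).2

end BlockInc

/- Clamping to `[0,1]` keeps every rounded point in the cube, so the monotonicity of `f` applies
for all `x`, as the pointwise bounds under the integral require. -/
def floorIndex (n : ℕ) (t : ℝ) : ℤ := ⌊(n : ℝ) * projIcc (0 : ℝ) 1 zero_le_one t⌋

def ceilIndex (n : ℕ) (t : ℝ) : ℤ := ⌈(n : ℝ) * projIcc (0 : ℝ) 1 zero_le_one t⌉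

section Rounding

variable {n : ℕ} {t : ℝ}

theorem floorIndex_of_mem_Icc (ht : t ∈ Icc 0 1) : floorIndex n t = ⌊(n : ℝ) * t⌋ := by
  rw [floorIndex, projIcc_of_mem _ ht]

theorem ceilIndex_of_mem_Icc (ht : t ∈ Icc 0 1) : ceilIndex n t = ⌈(n : ℝ) * t⌉ := by
  rw [ceilIndex, projIcc_of_mem _ ht]

theorem floorIndex_le_ceilIndex : floorIndex n t ≤ ceilIndex n t :=
  Int.floor_le_ceil _

theorem floorIndex_div_mem_Icc (hn : 0 < n) : (floorIndex n t / n : ℝ) ∈ Icc 0 1 := by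
  have h := (projIcc (0 : ℝ) 1 zero_le_one t).2
  have hn' : (0 : ℝ) < n := Nat.cast_pos.2 hn
  constructor
  · have : (0 : ℤ) ≤ floorIndex n t := Int.floor_nonneg.2 (by nlinarith [h.1])
    positivity
  · rw [div_le_one hn']
    exact (Int.floor_le _).trans (by nlinarith [h.2])

theorem ceilIndex_div_mem_Icc (hn : 0 < n) : (ceilIndex n t / n : ℝ) ∈ Icc 0 1 := by
  have h := (projIcc (0 : ℝ) 1 zero_le_one t).2
  have hn' : (0 : ℝ) < n := Nat.cast_pos.2 hn
  constructor
  · have : (0 : ℤ) ≤ ceilIndex n t := Int.ceil_nonneg (by nlinarith [h.1])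
    positivity
  · rw [div_le_one hn']
    have : ceilIndex n t ≤ n := Int.ceil_le.2 (by rw [Int.cast_natCast]; nlinarith [h.2])
    exact_mod_cast this

theorem floorIndex_eq_and_ceilIndex_eq_of_mem_Ioo {k : ℕ} (hk : k < n) (ht : t ∈ Ioo (k / n : ℝ) ((k + 1) / n)) :
    floorIndex n t = k ∧ ceilIndex n t = k + 1 := by
  have hn : (0 : ℝ) < n := Nat.cast_pos.2 (k.zero_le.trans_lt hk)
  have hk' : (k : ℝ) + 1 ≤ n := by exact_mod_cast hk
  have h₁ : (k : ℝ) < n * t := by have := (div_lt_iff₀ hn).1 ht.1; linarith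
  have h₂ : (n : ℝ) * t < k + 1 := by have := (lt_div_iff₀ hn).1 ht.2; linarith
  have ht01 : t ∈ Icc 0 1 := ⟨by nlinarith [k.cast_nonneg (α := ℝ)], by nlinarith⟩
  rw [floorIndex_of_mem_Icc ht01, ceilIndex_of_mem_Icc ht01, Int.floor_eq_iff, Int.ceil_eq_iff]
  push_cast
  exact ⟨⟨h₁.le, h₂⟩, ⟨by linarith, h₂.le⟩⟩

theorem measurable_floorIndex (n : ℕ) : Measurable (floorIndex n) :=
  Int.measurable_floor.comp (by fun_prop)

theorem measurable_ceilIndex (n : ℕ) : Measurable (ceilIndex n) :=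
  Int.measurable_ceil.comp (by fun_prop)

theorem Ico_zero_one_subset_iUnion_Ico (hn : 0 < n) :
    Ico (0 : ℝ) 1 ⊆ ⋃ k : Fin n, Ico ((k : ℕ) / n : ℝ) (((k : ℕ) + 1) / n) := by
  intro t ht
  have hn' : (0 : ℝ) < n := Nat.cast_pos.2 hn
  have hnt : 0 ≤ (n : ℝ) * t := mul_nonneg hn'.le ht.1
  have hlt : ⌊(n : ℝ) * t⌋₊ < n := (Nat.floor_lt hnt).2 (by nlinarith [ht.2])
  refine mem_iUnion.2 ⟨⟨_, hlt⟩, ?_, ?_⟩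
  · rw [div_le_iff₀ hn']
    exact (Nat.floor_le hnt).trans_eq (mul_comm _ _)
  · rw [lt_div_iff₀ hn', mul_comm]
    exact Nat.lt_floor_add_one _

theorem lintegral_sub_ceilIndex_floorIndex_le (hn : 0 < n) {g : ℝ → ℝ}
    (hg : MonotoneOn g (Icc 0 1)) :
    ∫⁻ t in Icc 0 1, ENNReal.ofReal (g (ceilIndex n t / n) - g (floorIndex n t / n)) ≤
      ENNReal.ofReal ((g 1 - g 0) / n) := by
  set F : ℝ → ℝ≥0∞ := fun t ↦ ENNReal.ofReal (g (ceilIndex n t / n) - g (floorIndex n t / n))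
  set a : ℕ → ℝ := fun k ↦ g (k / n)
  have hn' : (0 : ℝ) < n := Nat.cast_pos.2 hn
  have hmem : ∀ j ≤ n, (j / n : ℝ) ∈ Icc 0 1 := fun j hj ↦
    ⟨by positivity, div_le_one_of_le₀ (by exact_mod_cast hj) hn'.le⟩
  have ha : ∀ k : Fin n, a k ≤ a (k + 1) := fun k ↦
    hg (hmem k k.isLt.le) (hmem (k + 1) k.isLt) (by gcongr; exact_mod_cast k.1.le_succ)
  have hcell : ∀ k : Fin n, ∫⁻ t in Ico ((k : ℕ) / n : ℝ) (((k : ℕ) + 1) / n), F t =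
      ENNReal.ofReal ((a (k + 1) - a k) * (1 / n)) := fun k ↦ by
    rw [← setLIntegral_congr Ioo_ae_eq_Ico, setLIntegral_congr_fun measurableSet_Ioo
      (g := fun _ ↦ ENNReal.ofReal (a (k + 1) - a k)), setLIntegral_const, Real.volume_Ioo,
      ENNReal.ofReal_mul (sub_nonneg.2 (ha k))]
    · congr 2
      ring
    · intro t ht
      obtain ⟨hfl, hce⟩ := floorIndex_eq_and_ceilIndex_eq_of_mem_Ioo k.isLt ht
      simp [F, a, hfl, hce]
  calc ∫⁻ t in Icc 0 1, F t
      = ∫⁻ t in Ico 0 1, F t := setLIntegral_congr Ico_ae_eq_Icc.symm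
    _ ≤ ∫⁻ t in ⋃ k : Fin n, Ico ((k : ℕ) / n : ℝ) (((k : ℕ) + 1) / n), F t :=
        lintegral_mono_set (Ico_zero_one_subset_iUnion_Ico hn)
    _ ≤ ∑ k : Fin n, ∫⁻ t in Ico ((k : ℕ) / n : ℝ) (((k : ℕ) + 1) / n), F t :=
        (lintegral_iUnion_le _ _).trans_eq (tsum_fintype _)
    _ = ENNReal.ofReal (∑ k : Fin n, (a (k + 1) - a k) * (1 / n)) := by
        simp_rw [hcell]
        exact (ENNReal.ofReal_sum_of_nonneg fun k _ ↦
          mul_nonneg (sub_nonneg.2 (ha k)) (by positivity)).symm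
    _ = ENNReal.ofReal ((g 1 - g 0) / n) := by
        rw [← Finset.sum_mul, Fin.sum_univ_eq_sum_range (fun k ↦ a (k + 1) - a k),
          Finset.sum_range_sub]
        simp [a, hn'.ne', div_eq_mul_inv]

end Rounding

section Corner

variable {d : ℕ}

def cornerIndex (n k : ℕ) (x : Fin d → ℝ) : Fin d → ℤ :=
  fun i ↦ if (i : ℕ) < k then ceilIndex n (x i) else floorIndex n (x i)

def corner (n k : ℕ) (x : Fin d → ℝ) : Fin d → ℝ :=
  fun i ↦ cornerIndex n k x i / n

theorem measurable_cornerIndex (n k : ℕ) : Measurable (cornerIndex (d := d) n k) := by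
  refine measurable_pi_lambda _ fun i ↦ ?_
  unfold cornerIndex
  split_ifs
  · exact (measurable_ceilIndex n).comp (measurable_pi_apply i)
  · exact (measurable_floorIndex n).comp (measurable_pi_apply i)

/- `f` need not be measurable: the integrand factors through the countable set of index vectors. -/
theorem measurable_ofReal_sub_comp_corner (f : (Fin d → ℝ) → ℝ) (n k l : ℕ) :
    Measurable fun x ↦ ENNReal.ofReal (f (corner n l x) - f (corner n k x)) := by
  have h := (measurable_of_countable fun m : (Fin d → ℤ) × (Fin d → ℤ) ↦
      ENNReal.ofReal (f (fun i ↦ m.1 i / n) - f (fun i ↦ m.2 i / n))).comp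
    ((measurable_cornerIndex n l).prodMk (measurable_cornerIndex n k))
  exact h

theorem corner_mem_cube {n : ℕ} (hn : 0 < n) (k : ℕ) (x : Fin d → ℝ) : corner n k x ∈ cube d := by
  intro i _
  unfold corner cornerIndex
  split_ifs
  · exact ceilIndex_div_mem_Icc hn
  · exact floorIndex_div_mem_Icc hn

theorem corner_mono (n : ℕ) (x : Fin d → ℝ) : Monotone fun k ↦ corner n k x := by
  intro k l hkl i
  dsimp only [corner, cornerIndex]
  gcongr ?_ / _
  split_ifs <;> first | exact le_rfl | exact Int.cast_le.2 floorIndex_le_ceilIndex | omega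

theorem corner_zero_of_mem_cube (n : ℕ) {x : Fin d → ℝ} (hx : x ∈ cube d) :
    corner n 0 x = fun i ↦ (⌊(n : ℝ) * x i⌋ : ℝ) / n := by
  ext i
  simp [corner, cornerIndex, floorIndex_of_mem_Icc (hx i (mem_univ i))]

theorem corner_self_of_mem_cube (n : ℕ) {x : Fin d → ℝ} (hx : x ∈ cube d) :
    corner n d x = fun i ↦ (⌈(n : ℝ) * x i⌉ : ℝ) / n := by
  ext i
  simp [corner, cornerIndex, ceilIndex_of_mem_Icc (hx i (mem_univ i))]

theorem corner_succ_update {n k : ℕ} (hk : k < d) (x : Fin d → ℝ) (t : ℝ) :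
    corner n (k + 1) (Function.update x ⟨k, hk⟩ t) =
      Function.update (corner n k x) ⟨k, hk⟩ (ceilIndex n t / n) := by
  ext i
  rcases eq_or_ne i ⟨k, hk⟩ with rfl | hi
  · simp [corner, cornerIndex]
  · have hik : (i : ℕ) ≤ k ↔ (i : ℕ) < k := by
      have : (i : ℕ) ≠ k := fun h ↦ hi (Fin.ext h)
      omega
    simp [corner, cornerIndex, hi, hik]

theorem corner_update {n k : ℕ} (hk : k < d) (x : Fin d → ℝ) (t : ℝ) :
    corner n k (Function.update x ⟨k, hk⟩ t) =
      Function.update (corner n k x) ⟨k, hk⟩ (floorIndex n t / n) := by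
  ext i
  rcases eq_or_ne i ⟨k, hk⟩ with rfl | hi
  · simp [corner, cornerIndex]
  · simp [corner, cornerIndex, hi]

end Corner

namespace BlockInc

variable {d : ℕ} {f : (Fin d → ℝ) → ℝ} {n : ℕ}

theorem monotone_comp_corner (hf : BlockInc d f) (hn : 0 < n) (x : Fin d → ℝ) :
    Monotone fun k ↦ f (corner n k x) :=
  fun _ _ hkl ↦ hf _ _ (corner_mem_cube hn _ x) (corner_mem_cube hn _ x) (corner_mono n x hkl)

theorem lintegral_sub_corner_succ_le (hf : BlockInc d f) (hn : 0 < n) {k : ℕ} (hk : k < d) :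
    ∫⁻ x, ENNReal.ofReal (f (corner n (k + 1) x) - f (corner n k x))
        ∂Measure.pi (fun _ ↦ volume.restrict (Icc (0 : ℝ) 1)) ≤
      ENNReal.ofReal ((f 1 - f 0) / n) := by
  refine lintegral_pi_le_of_lintegral_update_le
    (measurable_ofReal_sub_comp_corner f n k (k + 1)) ⟨k, hk⟩ fun x ↦ ?_
  have hc := corner_mem_cube hn k x
  have hg : MonotoneOn (fun t ↦ f (Function.update (corner n k x) ⟨k, hk⟩ t)) (Icc 0 1) :=
    fun s hs t ht hst ↦ hf _ _ (update_mem_cube hc _ hs) (update_mem_cube hc _ ht)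
      (Function.update_mono hst)
  simp_rw [corner_succ_update hk, corner_update hk]
  refine (lintegral_sub_ceilIndex_floorIndex_le hn hg).trans (ENNReal.ofReal_le_ofReal ?_)
  gcongr
  · exact hf.apply_le_apply_one (update_mem_cube hc _ ⟨zero_le_one, le_rfl⟩)
  · exact hf.apply_zero_le (update_mem_cube hc _ ⟨le_rfl, zero_le_one⟩)

theorem lintegral_sq_sub_le (hf : BlockInc d f) (hn : 0 < n) :
    ∫⁻ x in cube d, ENNReal.ofReal
        ((f (fun i ↦ (⌈(n : ℝ) * x i⌉ : ℝ) / n) - f (fun i ↦ (⌊(n : ℝ) * x i⌋ : ℝ) / n)) ^ 2) ≤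
      ENNReal.ofReal (d * (f 1 - f 0) ^ 2 / n) := by
  have hosc : 0 ≤ f 1 - f 0 := sub_nonneg.2 (hf.apply_zero_le (one_mem_cube d))
  calc ∫⁻ x in cube d, ENNReal.ofReal
        ((f (fun i ↦ (⌈(n : ℝ) * x i⌉ : ℝ) / n) - f (fun i ↦ (⌊(n : ℝ) * x i⌋ : ℝ) / n)) ^ 2)
      = ∫⁻ x in cube d, ENNReal.ofReal ((f (corner n d x) - f (corner n 0 x)) ^ 2) :=
        setLIntegral_congr_fun (MeasurableSet.univ_pi fun _ ↦ measurableSet_Icc) fun x hx ↦ by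
          rw [corner_zero_of_mem_cube n hx, corner_self_of_mem_cube n hx]
    _ ≤ ∫⁻ x in cube d,
          ENNReal.ofReal (f 1 - f 0) * ENNReal.ofReal (f (corner n d x) - f (corner n 0 x)) := by
        refine lintegral_mono fun x ↦ ?_
        have h₀ := hf.monotone_comp_corner hn x d.zero_le
        have h₁ := hf.apply_le_apply_one (corner_mem_cube hn d x)
        have h₂ := hf.apply_zero_le (corner_mem_cube hn 0 x)
        rw [← ENNReal.ofReal_mul hosc, sq]
        exact ENNReal.ofReal_le_ofReal
          (mul_le_mul_of_nonneg_right (by linarith) (sub_nonneg.2 h₀))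
    _ = ENNReal.ofReal (f 1 - f 0) * ∑ k ∈ Finset.range d,
          ∫⁻ x, ENNReal.ofReal (f (corner n (k + 1) x) - f (corner n k x))
            ∂Measure.pi (fun _ ↦ volume.restrict (Icc (0 : ℝ) 1)) := by
        simp_rw [ENNReal.ofReal_sub_eq_sum_range_ofReal_sub (hf.monotone_comp_corner hn _) d]
        rw [lintegral_const_mul' _ _ ENNReal.ofReal_ne_top, volume_restrict_cube,
          lintegral_finsetSum _ fun k _ ↦ measurable_ofReal_sub_comp_corner f n k (k + 1)]
    _ ≤ ENNReal.ofReal (f 1 - f 0) * ∑ _k ∈ Finset.range d, ENNReal.ofReal ((f 1 - f 0) / n) := by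
        gcongr with k hk
        exact hf.lintegral_sub_corner_succ_le hn (Finset.mem_range.1 hk)
    _ = ENNReal.ofReal (d * (f 1 - f 0) ^ 2 / n) := by
        rw [Finset.sum_const, Finset.card_range, nsmul_eq_mul, ← ENNReal.ofReal_natCast,
          ← ENNReal.ofReal_mul d.cast_nonneg, ← ENNReal.ofReal_mul hosc]
        ring_nf

end BlockInc

theorem stmt15_general (d n1 : ℕ) (hn1 : 1 ≤ n1)
    (f : (Fin d → ℝ) → ℝ) (hf : BlockInc d f)
    (M : ℝ) (hM : ∀ x ∈ cube d, |f x| ≤ M) :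
    (∫⁻ x in cube d,
        ENNReal.ofReal
          ((f (fun j => (⌈(n1 : ℝ) * x j⌉ : ℤ) / n1) -
            f (fun j => (⌊(n1 : ℝ) * x j⌋ : ℤ) / n1)) ^ 2)) ≤
      ENNReal.ofReal (4 * (d : ℝ) * ((n1 ^ d : ℕ) : ℝ) ^ (-(1 : ℝ) / d) * M ^ 2) := by
  have hosc : (f 1 - f 0) ^ 2 ≤ 4 * M ^ 2 := by
    have h₁ := abs_le.1 (hM 1 (one_mem_cube d))
    have h₀ := abs_le.1 (hM 0 (zero_mem_cube d))
    nlinarith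
  refine (hf.lintegral_sq_sub_le hn1).trans (ENNReal.ofReal_le_ofReal ?_)
  rw [mul_assoc 4, natCast_mul_rpow_neg_one_div]
  calc (d : ℝ) * (f 1 - f 0) ^ 2 / n1 = d / n1 * (f 1 - f 0) ^ 2 := by ring
    _ ≤ d / n1 * (4 * M ^ 2) := by gcongr
    _ = 4 * (d / n1) * M ^ 2 := by ring

/-- for `d ≥ 1`, `n1 = n^{1/d} ≥ 1` and a bounded block increasing `f`, with
`f_L(x) = f(⌊n1 x⌋/n1)` and `f_U(x) = f(⌈n1 x⌉/n1)` (coordinatewise), one has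
`∫_{[0,1]^d} (f_U − f_L)² dx ≤ 4 d n^{−1/d} ‖f‖∞²`. -/
theorem stmt15 (d n1 : ℕ) (hd : 1 ≤ d) (hn1 : 1 ≤ n1)
    (f : (Fin d → ℝ) → ℝ) (hf : BlockInc d f)
    (M : ℝ) (hM : ∀ x ∈ cube d, |f x| ≤ M) :
    (∫⁻ x in cube d,
        ENNReal.ofReal
          ((f (fun j => (⌈(n1 : ℝ) * x j⌉ : ℤ) / n1) -
            f (fun j => (⌊(n1 : ℝ) * x j⌋ : ℤ) / n1)) ^ 2)) ≤
      ENNReal.ofReal (4 * (d : ℝ) * ((n1 ^ d : ℕ) : ℝ) ^ (-(1 : ℝ) / d) * M ^ 2) :=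
  stmt15_general d n1 hn1 f hf M hM

end
end

section
/- Let h : [0,∞) → (0,∞) be a non-decreasing function such that (i) there exists x0 ≥ 0 such that h is concave on [x0, ∞), and (ii) there exists x1 > x0 such that h(x1) − x1·h'_+(x1) ≥ h(x0), where h'_+ denotes the right derivative of h. Then for every nonnegative random variable X with E X < ∞, one has E h(X) ≤ (h(x1)/h(0)) · h(E X). -/
/-!
Let `m = E X` and `t = max m x₁`. The tangent line `ℓ` of `h` at `t` (with right-derivative slope)
dominates `h` on `[x₀, ∞)` by concavity. Its intercept `h t - t h'₊(t)` is non-decreasing in `t`,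
so it is at least `h x₁ - x₁ h'₊(x₁) ≥ h x₀`; since `ℓ` has non-negative slope and `h` is monotone,
`ℓ` dominates `h` on `[0, x₀]` too. Hence `E h(X) ≤ ℓ(m) ≤ h t`, and `h t ≤ (h x₁ / h 0) h m`
because `h x₁ = (h x₁ / h 0) h 0 ≤ (h x₁ / h 0) h m`.
-/

open MeasureTheory Set

section TangentLine

variable {S : Set ℝ} {f : ℝ → ℝ} {x y : ℝ}

lemma ConvexOn.add_rightDeriv_mul_sub_le (hf : ConvexOn ℝ S f) (hx : x ∈ interior S)
    (hy : y ∈ S) : f x + derivWithin f (Ioi x) x * (y - x) ≤ f y := by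
  rcases lt_trichotomy x y with hxy | rfl | hyx
  · have hslope := hf.rightDeriv_le_slope_of_mem_interior hx hy hxy
    rw [slope_def_field, le_div_iff₀ (sub_pos.2 hxy)] at hslope
    linarith
  · simp
  · have hslope := (hf.slope_le_leftDeriv_of_mem_interior hy hx hyx).trans
      (hf.leftDeriv_le_rightDeriv_of_mem_interior hx)
    rw [slope_def_field, div_le_iff₀ (sub_pos.2 hyx)] at hslope
    linarith

lemma ConcaveOn.le_add_rightDeriv_mul_sub (hf : ConcaveOn ℝ S f) (hx : x ∈ interior S)
    (hy : y ∈ S) : f y ≤ f x + derivWithin f (Ioi x) x * (y - x) := by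
  have h := hf.neg.add_rightDeriv_mul_sub_le hx hy
  simp only [derivWithin.neg, Pi.neg_apply] at h
  linarith

lemma ConcaveOn.antitoneOn_rightDeriv (hf : ConcaveOn ℝ S f) :
    AntitoneOn (fun x ↦ derivWithin f (Ioi x) x) (interior S) := by
  intro x hx y hy hxy
  simpa only [derivWithin.neg, neg_le_neg_iff] using hf.neg.monotoneOn_rightDeriv hx hy hxy

lemma ConcaveOn.sub_mul_rightDeriv_le (hf : ConcaveOn ℝ S f) (hx : x ∈ interior S)
    (hy : y ∈ interior S) (hxy : x ≤ y) (hx0 : 0 ≤ x) :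
    f x - x * derivWithin f (Ioi x) x ≤ f y - y * derivWithin f (Ioi y) y := by
  have htangent := hf.le_add_rightDeriv_mul_sub hy (interior_subset hx)
  have hderiv := hf.antitoneOn_rightDeriv hx hy hxy
  nlinarith

end TangentLine

lemma le_tangent_of_concaveOn_Ici_of_monotoneOn {h : ℝ → ℝ} {x0 t : ℝ}
    (hmono : MonotoneOn h (Ici 0)) (hconc : ConcaveOn ℝ (Ici x0) h) (hx0t : x0 < t)
    (hslope : 0 ≤ derivWithin h (Ioi t) t)
    (hintercept : h x0 ≤ h t - t * derivWithin h (Ioi t) t) {x : ℝ} (hx : 0 ≤ x) :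
    h x ≤ h t + derivWithin h (Ioi t) t * (x - t) := by
  have ht : t ∈ interior (Ici x0) := by rwa [interior_Ici]
  rcases le_or_gt x0 x with hx0x | hxx0
  · exact hconc.le_add_rightDeriv_mul_sub ht hx0x
  · have : h x ≤ h x0 := hmono hx (hx.trans hxx0.le) hxx0.le
    nlinarith

lemma apply_max_le_div_mul {h : ℝ → ℝ} (hpos : ∀ x, 0 ≤ x → 0 < h x)
    (hmono : MonotoneOn h (Ici 0)) {m x1 : ℝ} (hm : 0 ≤ m) (hx1 : 0 ≤ x1) :
    h (max m x1) ≤ h x1 / h 0 * h m := by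
  have h0 : 0 < h 0 := hpos 0 le_rfl
  rcases max_choice m x1 with hmax | hmax <;> rw [hmax]
  · exact le_mul_of_one_le_left (hpos m hm).le
      ((one_le_div h0).2 (hmono self_mem_Ici hx1 hx1))
  · rw [div_mul_eq_mul_div, le_div_iff₀ h0]
    exact mul_le_mul_of_nonneg_left (hmono self_mem_Ici hm hm) (hpos x1 hx1).le

lemma lintegral_ofReal_le_of_le_affine {Ω : Type*} [MeasurableSpace Ω] {μ : Measure Ω}
    [IsProbabilityMeasure μ] {Y X : Ω → ℝ} {a b : ℝ} (hXint : Integrable X μ)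
    (hY0 : ∀ ω, 0 ≤ Y ω) (hY : ∀ ω, Y ω ≤ a + b * X ω) :
    ∫⁻ ω, ENNReal.ofReal (Y ω) ∂μ ≤ ENNReal.ofReal (a + b * ∫ ω, X ω ∂μ) := by
  have hint : Integrable (fun ω ↦ a + b * X ω) μ := (integrable_const a).add (hXint.const_mul b)
  calc ∫⁻ ω, ENNReal.ofReal (Y ω) ∂μ
      ≤ ∫⁻ ω, ENNReal.ofReal (a + b * X ω) ∂μ :=
        lintegral_mono fun ω ↦ ENNReal.ofReal_le_ofReal (hY ω)
    _ = ENNReal.ofReal (∫ ω, a + b * X ω ∂μ) :=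
        (ofReal_integral_eq_lintegral_ofReal hint
          (ae_of_all _ fun ω ↦ (hY0 ω).trans (hY ω))).symm
    _ = ENNReal.ofReal (a + b * ∫ ω, X ω ∂μ) := by
        rw [integral_add (integrable_const a) (hXint.const_mul b), integral_const,
          integral_const_mul, probReal_univ, one_smul]

/-- a generalised Jensen inequality. Let `h : [0,∞) → (0,∞)` be non-decreasing,
concave on `[x0,∞)` for some `x0 ≥ 0`, and suppose there exists `x1 > x0` with
`h(x1) − x1 h'_+(x1) ≥ h(x0)`, where `h'_+` is the right derivative. Then for every
nonnegative integrable random variable `X`, `E h(X) ≤ (h(x1)/h(0)) · h(E X)`. -/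
theorem stmt16 (h : ℝ → ℝ) (x0 x1 : ℝ)
    (hpos : ∀ x : ℝ, 0 ≤ x → 0 < h x)
    (hmono : MonotoneOn h (Set.Ici (0 : ℝ)))
    (hx0 : 0 ≤ x0)
    (hconc : ConcaveOn ℝ (Set.Ici x0) h)
    (hx01 : x0 < x1)
    (hkey : h x0 ≤ h x1 - x1 * derivWithin h (Set.Ici x1) x1)
    {Ω : Type*} [MeasurableSpace Ω] (μ : Measure Ω) [IsProbabilityMeasure μ]
    (X : Ω → ℝ) (hX : ∀ ω, 0 ≤ X ω) (hXint : Integrable X μ) :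
    (∫⁻ ω, ENNReal.ofReal (h (X ω)) ∂μ) ≤
      ENNReal.ofReal (h x1 / h 0 * h (∫ ω, X ω ∂μ)) := by
  set m := ∫ ω, X ω ∂μ
  have hm : 0 ≤ m := integral_nonneg hX
  set t := max m x1
  set d := derivWithin h (Ioi t) t
  have hx1 : 0 ≤ x1 := hx0.trans hx01.le
  have hx0t : x0 < t := hx01.trans_le (le_max_right m x1)
  have hd : 0 ≤ d :=
    (hmono.mono (Ioi_subset_Ici (hx1.trans (le_max_right m x1)))).derivWithin_nonneg
  have hintercept : h x0 ≤ h t - t * d := by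
    rw [← derivWithin_Ioi_eq_Ici] at hkey
    refine hkey.trans (hconc.sub_mul_rightDeriv_le ?_ ?_ (le_max_right m x1) hx1) <;>
      simpa only [interior_Ici]
  have hht : h t ≤ h x1 / h 0 * h m := apply_max_le_div_mul hpos hmono hm hx1
  calc (∫⁻ ω, ENNReal.ofReal (h (X ω)) ∂μ)
      ≤ ENNReal.ofReal (h t - t * d + d * m) :=
        lintegral_ofReal_le_of_le_affine hXint (fun ω ↦ (hpos _ (hX ω)).le) fun ω ↦ by
          linarith [le_tangent_of_concaveOn_Ici_of_monotoneOn hmono hconc hx0t hd hintercept (hX ω)]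
    _ ≤ ENNReal.ofReal (h x1 / h 0 * h m) := by
        refine ENNReal.ofReal_le_ofReal ?_
        linarith [mul_nonneg hd (sub_nonneg.2 (le_max_left m x1))]
end

section
/- There exist universal constants c > 0 and ε0 > 0 such that for every integer n1 ≥ 2 with n = n1², there is a subset S of M(L_{2,n}) ∩ B_2(1) with cardinality |S| ≥ exp(c (log n)²) such that ‖θ − θ'‖₂ ≥ ε0 for all distinct θ, θ' ∈ S. In particular, the ε0-covering number of M(L_{2,n}) ∩ B_2(1) in the Euclidean norm satisfies log N(ε0, M(L_{2,n}) ∩ B_2(1), ‖·‖₂) ≥ c (log n)². -/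
open scoped ENNReal NNReal

noncomputable section

/-- The monotone cone `M(L_{2,n})` on the lattice `{1,...,n1}²`, ordered coordinatewise. -/
def monotoneCone2 (n1 : ℕ) : Set ((Fin 2 → Fin n1) → ℝ) :=
  {θ | ∀ x y : Fin 2 → Fin n1, x ≤ y → θ x ≤ θ y}

/-!
The functions `u i = 16⁻ⁱ · 1[top 256ⁱ points]` on `Fin n1` are unit vectors with
`⟪u i, u j⟫ = 16^(-|i - j|)`, so for `K ≈ log₂₅₆ n1` the `K²` tensor products `u i ⊗ u j` are
monotone on the grid and have a Gram matrix with row sums at most `(17/15)²`. By Gershgorin its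
quadratic form lies between `(2 - (17/15)²)` and `(17/15)²` times the identity. Hence the
combinations `(3K)⁻¹ ∑ (1 + b_p) (u ⊗ u)_p`, `b` running over a binary code of length `K²` and
minimum distance `> K²/4` (Gilbert–Varshamov gives `(27/16)^(K²/4)` codewords), are monotone,
lie in the unit ball and are pairwise `1/8` apart. Since `K² ≳ (log n)²` this is the packing, and
a `1/20`-cover needs a separate centre for each of its points.
-/

open Finset

section HammingCode

variable {ι : Type*} [Fintype ι] [DecidableEq ι]

theorem sum_three_pow_card_eq_four_pow (c : ι → Bool) :
    ∑ y : ι → Bool, 3 ^ #{i | y i = c i} = 4 ^ Fintype.card ι := by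
  have hprod (y : ι → Bool) : 3 ^ #{i | y i = c i} = ∏ i, if y i = c i then 3 else 1 := by
    rw [← prod_filter, prod_const]
  simp_rw [hprod, ← Fintype.prod_sum (fun i b => if b = c i then 3 else 1), Fintype.sum_bool]
  rw [← card_univ, ← prod_const]
  exact prod_congr rfl fun i _ => by cases c i <;> rfl

theorem card_hammingDist_lt_mul_le (c : ι → Bool) (d : ℕ) :
    #{y | hammingDist y c < d} * 3 ^ (Fintype.card ι + 1 - d) ≤ 4 ^ Fintype.card ι := by
  have hagree (y : ι → Bool) : #{i | y i = c i} + hammingDist y c = Fintype.card ι := by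
    rw [hammingDist, ← card_univ]
    exact card_filter_add_card_filter_not _
  calc #{y | hammingDist y c < d} * 3 ^ (Fintype.card ι + 1 - d)
      = ∑ y with hammingDist y c < d, 3 ^ (Fintype.card ι + 1 - d) := by rw [sum_const, smul_eq_mul]
    _ ≤ ∑ y with hammingDist y c < d, 3 ^ #{i | y i = c i} := by
      gcongr with y hy
      · norm_num
      · have := hagree y
        have := (mem_filter.1 hy).2
        omega
    _ ≤ ∑ y : ι → Bool, 3 ^ #{i | y i = c i} := sum_le_sum_of_subset (filter_subset _ _)
    _ = 4 ^ Fintype.card ι := sum_three_pow_card_eq_four_pow c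

theorem exists_hammingDist_separated_covering {β : Type*} [Fintype β] [DecidableEq β]
    {d : ℕ} (hd : 0 < d) :
    ∃ C : Finset (ι → β), (∀ b ∈ C, ∀ b' ∈ C, b ≠ b' → d ≤ hammingDist b b') ∧
      ∀ x, ∃ c ∈ C, hammingDist x c < d := by
  classical
  let separated : Finset (Finset (ι → β)) :=
    {C | ∀ b ∈ C, ∀ b' ∈ C, b ≠ b' → d ≤ hammingDist b b'}
  obtain ⟨C, hC, hmax⟩ := separated.exists_max_image card ⟨∅, by simp [separated]⟩
  have hCsep := (mem_filter.1 hC).2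
  refine ⟨C, hCsep, fun x => ?_⟩
  by_contra! hfar
  have hx : x ∉ C := fun hx => by simpa [hd.ne'] using hfar x hx
  have hins : insert x C ∈ separated := by
    refine mem_filter.2 ⟨mem_univ _, ?_⟩
    simp only [mem_insert]
    rintro b (rfl | hb) b' (rfl | hb') hne
    · exact absurd rfl hne
    · exact hfar b' hb'
    · exact hammingDist_comm b b' ▸ hfar b hb
    · exact hCsep b hb b' hb' hne
  have := hmax _ hins
  rw [card_insert_of_notMem hx] at this
  omega

theorem exists_hammingDist_separated_card {d : ℕ} (hd : 0 < d) :
    ∃ C : Finset (ι → Bool), (∀ b ∈ C, ∀ b' ∈ C, b ≠ b' → d ≤ hammingDist b b') ∧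
      2 ^ Fintype.card ι * 3 ^ (Fintype.card ι + 1 - d) ≤ #C * 4 ^ Fintype.card ι := by
  obtain ⟨C, hsep, hcov⟩ := exists_hammingDist_separated_covering (ι := ι) (β := Bool) hd
  refine ⟨C, hsep, ?_⟩
  have hunion : (univ : Finset (ι → Bool)) ⊆ C.biUnion fun c => {y | hammingDist y c < d} := by
    intro x _
    obtain ⟨c, hc, hxc⟩ := hcov x
    exact mem_biUnion.2 ⟨c, hc, by simpa using hxc⟩
  calc 2 ^ Fintype.card ι * 3 ^ (Fintype.card ι + 1 - d)
      = #(univ : Finset (ι → Bool)) * 3 ^ (Fintype.card ι + 1 - d) := by simp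
    _ ≤ (∑ c ∈ C, #{y | hammingDist y c < d}) * 3 ^ (Fintype.card ι + 1 - d) := by
      gcongr
      exact (card_le_card hunion).trans card_biUnion_le
    _ ≤ ∑ c ∈ C, 4 ^ Fintype.card ι := by
      rw [sum_mul]
      exact sum_le_sum fun c _ => card_hammingDist_lt_mul_le c d
    _ = #C * 4 ^ Fintype.card ι := by rw [sum_const, smul_eq_mul]

end HammingCode

section GramBounds

variable {ι : Type*} [Fintype ι]

theorem sum_sum_mul_sq_add_sq_le {G : ι → ι → ℝ} (hsymm : ∀ p q, G p q = G q p) {R : ℝ}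
    (hrow : ∀ p, ∑ q, G p q ≤ R) (a : ι → ℝ) :
    ∑ p, ∑ q, G p q * (a p ^ 2 + a q ^ 2) ≤ 2 * R * ∑ p, a p ^ 2 := by
  have hrow' : ∑ p, ∑ q, G p q * a p ^ 2 ≤ R * ∑ p, a p ^ 2 := by
    rw [mul_sum]
    exact sum_le_sum fun p _ => by
      rw [← sum_mul]
      exact mul_le_mul_of_nonneg_right (hrow p) (sq_nonneg _)
  have hcol : ∑ p, ∑ q, G p q * a q ^ 2 = ∑ p, ∑ q, G p q * a p ^ 2 := by
    rw [sum_comm]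
    simp_rw [hsymm]
  simp_rw [mul_add, sum_add_distrib, hcol]
  linarith

theorem sum_sum_mul_le_of_row_sum_le {G : ι → ι → ℝ} (hsymm : ∀ p q, G p q = G q p)
    (hnonneg : ∀ p q, 0 ≤ G p q) {R : ℝ} (hrow : ∀ p, ∑ q, G p q ≤ R) (a : ι → ℝ) :
    ∑ p, ∑ q, a p * a q * G p q ≤ R * ∑ p, a p ^ 2 := by
  have hterm (p q : ι) : a p * a q * G p q ≤ G p q * (a p ^ 2 + a q ^ 2) / 2 := by
    nlinarith [hnonneg p q, mul_nonneg (hnonneg p q) (sq_nonneg (a p - a q))]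
  calc ∑ p, ∑ q, a p * a q * G p q ≤ ∑ p, ∑ q, G p q * (a p ^ 2 + a q ^ 2) / 2 :=
        sum_le_sum fun p _ => sum_le_sum fun q _ => hterm p q
    _ = (∑ p, ∑ q, G p q * (a p ^ 2 + a q ^ 2)) / 2 := by simp only [sum_div]
    _ ≤ R * ∑ p, a p ^ 2 := by linarith [sum_sum_mul_sq_add_sq_le hsymm hrow a]

theorem le_sum_sum_mul_of_row_sum_le [DecidableEq ι] {G : ι → ι → ℝ}
    (hsymm : ∀ p q, G p q = G q p) (hnonneg : ∀ p q, 0 ≤ G p q) (hdiag : ∀ p, G p p = 1) {R : ℝ}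
    (hrow : ∀ p, ∑ q, G p q ≤ R) (a : ι → ℝ) :
    (2 - R) * ∑ p, a p ^ 2 ≤ ∑ p, ∑ q, a p * a q * G p q := by
  have hterm (p q : ι) :
      (if p = q then 2 * a p ^ 2 else 0) - G p q * (a p ^ 2 + a q ^ 2) / 2 ≤ a p * a q * G p q := by
    split_ifs with h
    · subst h; rw [hdiag]; nlinarith
    · nlinarith [hnonneg p q, mul_nonneg (hnonneg p q) (sq_nonneg (a p + a q))]
  calc (2 - R) * ∑ p, a p ^ 2
      ≤ 2 * ∑ p, a p ^ 2 - (∑ p, ∑ q, G p q * (a p ^ 2 + a q ^ 2)) / 2 := by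
        linarith [sum_sum_mul_sq_add_sq_le hsymm hrow a]
    _ = ∑ p, ∑ q, ((if p = q then 2 * a p ^ 2 else 0) - G p q * (a p ^ 2 + a q ^ 2) / 2) := by
        simp only [sum_sub_distrib, sum_ite_eq, mem_univ, if_true, sum_div, mul_sum]
    _ ≤ ∑ p, ∑ q, a p * a q * G p q := sum_le_sum fun p _ => sum_le_sum fun q _ => hterm p q

end GramBounds

theorem dist_toLp_eq_sqrt_sum_sq {α : Type*} [Fintype α] (f g : α → ℝ) :
    dist (WithLp.toLp 2 f : EuclideanSpace ℝ α) (WithLp.toLp 2 g) = √(∑ w, (f w - g w) ^ 2) := by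
  simp [EuclideanSpace.dist_eq, Real.dist_eq, sq_abs]

theorem card_le_card_of_separated_of_covers {α : Type*} [Fintype α] {S T : Finset (α → ℝ)}
    {ε δ : ℝ} (hsep : ∀ θ ∈ S, ∀ θ' ∈ S, θ ≠ θ' → ε ≤ √(∑ w, (θ w - θ' w) ^ 2))
    (hcov : ∀ θ ∈ S, ∃ t ∈ T, √(∑ w, (θ w - t w) ^ 2) ≤ δ) (hδε : 2 * δ < ε) : #S ≤ #T := by
  refine card_le_card_of_forall_subsingleton _ hcov fun t _ θ hθ θ' hθ' => ?_
  by_contra hne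
  have hfar := hsep θ hθ.1 θ' hθ'.1 hne
  have hclose := hθ.2
  have hclose' := hθ'.2
  simp only [← dist_toLp_eq_sqrt_sum_sq] at hfar hclose hclose'
  linarith [dist_triangle_right (WithLp.toLp 2 θ : EuclideanSpace ℝ α) (WithLp.toLp 2 θ')
    (WithLp.toLp 2 t)]

theorem mul_sum_range_pow_dist_le {r : ℝ} (hr0 : 0 ≤ r) (hr1 : r ≤ 1) (i K : ℕ) :
    (1 - r) * ∑ j ∈ range K, r ^ Nat.dist i j ≤ 1 + r - r ^ (i + 1) := by
  induction i generalizing K with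
  | zero =>
    simp only [Nat.dist_zero_left, mul_neg_geom_sum, zero_add, pow_one]
    linarith [pow_nonneg hr0 K]
  | succ i ih =>
    cases K with
    | zero =>
      simp only [range_zero, sum_empty, mul_zero]
      linarith [pow_le_one₀ hr0 hr1 (n := i + 1 + 1)]
    | succ K =>
      have hshift (j : ℕ) : Nat.dist (i + 1) (j + 1) = Nat.dist i j := Nat.dist_succ_succ
      rw [sum_range_succ', Nat.dist_comm, Nat.dist_zero_left]
      simp only [hshift]
      nlinarith [ih K, pow_succ r (i + 1)]

theorem card_filter_sub_le_val {n a : ℕ} (ha : a ≤ n) : #{x : Fin n | n - a ≤ (x : ℕ)} = a := by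
  have := card_filter_add_card_filter_not (s := univ) (fun x : Fin n => (x : ℕ) < n - a)
  simp only [not_lt, Fin.card_filter_val_lt, card_univ, Fintype.card_fin] at this
  omega

def scaledTopIndicator (n q i : ℕ) (x : Fin n) : ℝ :=
  if n - q ^ (2 * i) ≤ (x : ℕ) then ((q : ℝ)⁻¹) ^ i else 0

theorem scaledTopIndicator_nonneg (n q i : ℕ) (x : Fin n) : 0 ≤ scaledTopIndicator n q i x := by
  unfold scaledTopIndicator; split_ifs <;> positivity

theorem monotone_scaledTopIndicator (n q i : ℕ) : Monotone (scaledTopIndicator n q i) := by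
  intro x y hxy
  have hxy : (x : ℕ) ≤ y := hxy
  unfold scaledTopIndicator
  split_ifs <;> first | rfl | positivity | omega

theorem sum_scaledTopIndicator_mul_of_le {n q i j : ℕ} (hq : 0 < q) (hij : i ≤ j)
    (hi : q ^ (2 * i) ≤ n) :
    ∑ x, scaledTopIndicator n q i x * scaledTopIndicator n q j x = ((q : ℝ)⁻¹) ^ (j - i) := by
  have hpow : q ^ (2 * i) ≤ q ^ (2 * j) := Nat.pow_le_pow_right hq (by omega)
  have hterm (x : Fin n) : scaledTopIndicator n q i x * scaledTopIndicator n q j x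
      = if n - q ^ (2 * i) ≤ (x : ℕ) then ((q : ℝ)⁻¹) ^ (i + j) else 0 := by
    unfold scaledTopIndicator
    split_ifs <;> first | omega | simp [pow_add]
  simp_rw [hterm, sum_ite, sum_const_zero, add_zero, sum_const, card_filter_sub_le_val hi,
    nsmul_eq_mul]
  have hq' : (q : ℝ) ≠ 0 := by positivity
  have hnorm : ((q ^ (2 * i) : ℕ) : ℝ) * ((q : ℝ)⁻¹) ^ (2 * i) = 1 := by
    rw [Nat.cast_pow, ← mul_pow, mul_inv_cancel₀ hq', one_pow]
  rw [show i + j = 2 * i + (j - i) by omega, pow_add, ← mul_assoc, hnorm, one_mul]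

theorem sum_scaledTopIndicator_mul {n q i j : ℕ} (hq : 0 < q) (hi : q ^ (2 * i) ≤ n)
    (hj : q ^ (2 * j) ≤ n) :
    ∑ x, scaledTopIndicator n q i x * scaledTopIndicator n q j x = ((q : ℝ)⁻¹) ^ Nat.dist i j := by
  rcases le_total i j with hij | hji
  · rw [Nat.dist_eq_sub_of_le hij, sum_scaledTopIndicator_mul_of_le hq hij hi]
  · simp_rw [Nat.dist_comm i j, Nat.dist_eq_sub_of_le hji, mul_comm (scaledTopIndicator n q i _)]
    exact sum_scaledTopIndicator_mul_of_le hq hji hj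

theorem sum_fin_two_mul {β : Type*} [Fintype β] (f g : β → ℝ) :
    ∑ w : Fin 2 → β, f (w 0) * g (w 1) = (∑ x, f x) * ∑ y, g y := by
  rw [← (piFinTwoEquiv fun _ => β).symm.sum_comp, Fintype.sum_prod_type, sum_mul_sum]
  rfl

section BoolCombination

variable {ι α : Type*} [Fintype ι]

theorem sum_sq_sum_mul [Fintype α] (φ : ι → α → ℝ) (a : ι → ℝ) :
    ∑ w, (∑ p, a p * φ p w) ^ 2 = ∑ p, ∑ q, a p * a q * ∑ w, φ p w * φ q w := by
  simp_rw [sq, sum_mul_sum, mul_sum]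
  rw [sum_comm]
  refine sum_congr rfl fun p _ => ?_
  rw [sum_comm]
  exact sum_congr rfl fun q _ => sum_congr rfl fun w _ => by ring

def boolCoeff (b : ι → Bool) (p : ι) : ℝ := if b p then 2 else 1

def boolCombination (φ : ι → α → ℝ) (b : ι → Bool) (w : α) : ℝ := ∑ p, boolCoeff b p * φ p w

theorem sum_sq_boolCoeff_sub [DecidableEq ι] (b b' : ι → Bool) :
    ∑ p, (boolCoeff b p - boolCoeff b' p) ^ 2 = hammingDist b b' := by
  rw [hammingDist, card_filter, Nat.cast_sum]
  exact sum_congr rfl fun p _ => by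
    unfold boolCoeff; cases b p <;> cases b' p <;> norm_num

theorem monotone_boolCombination [Preorder α] {φ : ι → α → ℝ}
    (hmono : ∀ p, Monotone (φ p)) (b : ι → Bool) : Monotone (boolCombination φ b) :=
  fun _ _ hxy => sum_le_sum fun p _ =>
    mul_le_mul_of_nonneg_left (hmono p hxy) (by unfold boolCoeff; split_ifs <;> norm_num)

theorem sum_sq_boolCombination_le [Fintype α] {φ : ι → α → ℝ} (hφ : ∀ p w, 0 ≤ φ p w) {R : ℝ}
    (hrow : ∀ p, ∑ q, ∑ w, φ p w * φ q w ≤ R) (b : ι → Bool) :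
    ∑ w, boolCombination φ b w ^ 2 ≤ 4 * R * Fintype.card ι := by
  rcases isEmpty_or_nonempty ι with hι | ⟨⟨p₀⟩⟩
  · simp [boolCombination]
  have hR : 0 ≤ R := (sum_nonneg fun q _ => sum_nonneg fun w _ =>
    mul_nonneg (hφ p₀ w) (hφ q w)).trans (hrow p₀)
  have hcoeff : ∑ p, boolCoeff b p ^ 2 ≤ 4 * Fintype.card ι := by
    rw [Fintype.card_eq_sum_ones, Nat.cast_sum, mul_sum]
    exact sum_le_sum fun p _ => by unfold boolCoeff; split_ifs <;> norm_num
  calc ∑ w, boolCombination φ b w ^ 2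
      = ∑ p, ∑ q, boolCoeff b p * boolCoeff b q * ∑ w, φ p w * φ q w := sum_sq_sum_mul φ _
    _ ≤ R * ∑ p, boolCoeff b p ^ 2 :=
      sum_sum_mul_le_of_row_sum_le (fun p q => sum_congr rfl fun w _ => mul_comm _ _)
        (fun p q => sum_nonneg fun w _ => mul_nonneg (hφ p w) (hφ q w)) hrow _
    _ ≤ 4 * R * Fintype.card ι := by nlinarith

theorem le_sum_sq_boolCombination_sub [Fintype α] [DecidableEq ι] {φ : ι → α → ℝ}
    (hφ : ∀ p w, 0 ≤ φ p w) (hnorm : ∀ p, ∑ w, φ p w ^ 2 = 1) {R : ℝ}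
    (hrow : ∀ p, ∑ q, ∑ w, φ p w * φ q w ≤ R) (b b' : ι → Bool) :
    (2 - R) * hammingDist b b' ≤ ∑ w, (boolCombination φ b w - boolCombination φ b' w) ^ 2 := by
  have hdiff (w : α) : boolCombination φ b w - boolCombination φ b' w
      = ∑ p, (boolCoeff b p - boolCoeff b' p) * φ p w := by
    simp only [boolCombination, ← sum_sub_distrib, sub_mul]
  simp_rw [hdiff, sum_sq_sum_mul, ← sum_sq_boolCoeff_sub]
  exact le_sum_sum_mul_of_row_sum_le (fun p q => sum_congr rfl fun w _ => mul_comm _ _)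
    (fun p q => sum_nonneg fun w _ => mul_nonneg (hφ p w) (hφ q w))
    (fun p => by simpa [sq] using hnorm p) hrow _

end BoolCombination

section TensorIndicator

def tensorIndicator (n K : ℕ) (p : Fin K × Fin K) (w : Fin 2 → Fin n) : ℝ :=
  scaledTopIndicator n 16 p.1 (w 0) * scaledTopIndicator n 16 p.2 (w 1)

variable {n K : ℕ}

theorem tensorIndicator_nonneg (p : Fin K × Fin K) (w : Fin 2 → Fin n) :
    0 ≤ tensorIndicator n K p w :=
  mul_nonneg (scaledTopIndicator_nonneg ..) (scaledTopIndicator_nonneg ..)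

theorem monotone_tensorIndicator (p : Fin K × Fin K) : Monotone (tensorIndicator n K p) :=
  Monotone.mul ((monotone_scaledTopIndicator ..).comp (Function.monotone_eval 0))
    ((monotone_scaledTopIndicator ..).comp (Function.monotone_eval 1))
    (fun _ => scaledTopIndicator_nonneg ..) (fun _ => scaledTopIndicator_nonneg ..)

theorem sum_tensorIndicator_mul (hK : 256 ^ (K - 1) ≤ n) (p q : Fin K × Fin K) :
    ∑ w, tensorIndicator n K p w * tensorIndicator n K q w
      = (16 : ℝ)⁻¹ ^ Nat.dist p.1 q.1 * (16 : ℝ)⁻¹ ^ Nat.dist p.2 q.2 := by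
  have hscale (i : Fin K) : 16 ^ (2 * (i : ℕ)) ≤ n := by
    rw [pow_mul]
    exact (Nat.pow_le_pow_right (by norm_num) (by omega)).trans hK
  have hsplit (w : Fin 2 → Fin n) : tensorIndicator n K p w * tensorIndicator n K q w
      = (scaledTopIndicator n 16 p.1 (w 0) * scaledTopIndicator n 16 q.1 (w 0)) *
        (scaledTopIndicator n 16 p.2 (w 1) * scaledTopIndicator n 16 q.2 (w 1)) := by
    unfold tensorIndicator; ring
  rw [sum_congr rfl fun w _ => hsplit w,
    sum_fin_two_mul (fun x => scaledTopIndicator n 16 p.1 x * scaledTopIndicator n 16 q.1 x)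
      (fun y => scaledTopIndicator n 16 p.2 y * scaledTopIndicator n 16 q.2 y),
    sum_scaledTopIndicator_mul (by norm_num) (hscale _) (hscale _),
    sum_scaledTopIndicator_mul (by norm_num) (hscale _) (hscale _)]
  norm_num

theorem sum_sq_tensorIndicator (hK : 256 ^ (K - 1) ≤ n) (p : Fin K × Fin K) :
    ∑ w, tensorIndicator n K p w ^ 2 = 1 := by
  simpa [sq] using sum_tensorIndicator_mul hK p p

theorem sum_sum_tensorIndicator_mul_le (hK : 256 ^ (K - 1) ≤ n) (p : Fin K × Fin K) :
    ∑ q, ∑ w, tensorIndicator n K p w * tensorIndicator n K q w ≤ (17 / 15) ^ 2 := by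
  have hrow (i : Fin K) : ∑ j : Fin K, (16 : ℝ)⁻¹ ^ Nat.dist i j ≤ 17 / 15 := by
    have := mul_sum_range_pow_dist_le (r := (16 : ℝ)⁻¹) (by norm_num) (by norm_num) i K
    rw [← Fin.sum_univ_eq_sum_range] at this
    nlinarith [pow_nonneg (by norm_num : (0 : ℝ) ≤ 16⁻¹) (i + 1 : ℕ)]
  simp_rw [sum_tensorIndicator_mul hK, Fintype.sum_prod_type]
  rw [← sum_mul_sum, sq]
  exact mul_le_mul (hrow _) (hrow _) (sum_nonneg fun _ _ => by positivity) (by norm_num)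

end TensorIndicator

theorem twentySeven_pow_le_of_two_pow_mul_le {M e N : ℕ} (he : 3 * M ≤ 4 * e)
    (h : 2 ^ M * 3 ^ e ≤ N * 4 ^ M) :
    27 ^ M ≤ N ^ 4 * 16 ^ M := by
  have h27 : 27 ^ M ≤ 3 ^ (4 * e) := by
    rw [show 27 = 3 ^ 3 by rfl, ← pow_mul]; exact Nat.pow_le_pow_right (by norm_num) he
  have hfourth : 16 ^ M * 27 ^ M ≤ 16 ^ M * (N ^ 4 * 16 ^ M) := by
    calc 16 ^ M * 27 ^ M ≤ 16 ^ M * 3 ^ (4 * e) := Nat.mul_le_mul_left _ h27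
      _ = (2 ^ M * 3 ^ e) ^ 4 := by
          rw [mul_pow, ← pow_mul, ← pow_mul, mul_comm M, mul_comm e, pow_mul 2 4 M]; norm_num
      _ ≤ (N * 4 ^ M) ^ 4 := Nat.pow_le_pow_left h 4
      _ = 16 ^ M * (N ^ 4 * 16 ^ M) := by
          rw [mul_pow, ← pow_mul, mul_comm M, pow_mul, show 4 ^ 4 = 16 * 16 by rfl, mul_pow]; ring
  exact Nat.le_of_mul_le_mul_left hfourth (by positivity)

def codeword (n K : ℕ) (b : Fin K × Fin K → Bool) (w : Fin 2 → Fin n) : ℝ :=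
  (3 * K : ℝ)⁻¹ * boolCombination (tensorIndicator n K) b w

theorem codeword_mem_monotoneCone2 (n K : ℕ) (b : Fin K × Fin K → Bool) :
    codeword n K b ∈ monotoneCone2 n := fun _ _ hxy =>
  mul_le_mul_of_nonneg_left (monotone_boolCombination monotone_tensorIndicator b hxy)
    (by positivity)

theorem sum_sq_codeword_le {n K : ℕ} (hK : 256 ^ (K - 1) ≤ n) (b : Fin K × Fin K → Bool) :
    ∑ w, codeword n K b w ^ 2 ≤ 1 := by
  have hbound := sum_sq_boolCombination_le tensorIndicator_nonneg
    (sum_sum_tensorIndicator_mul_le hK) b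
  simp only [Fintype.card_prod, Fintype.card_fin, Nat.cast_mul] at hbound
  simp only [codeword, mul_pow, ← mul_sum]
  rcases K.eq_zero_or_pos with rfl | hK0
  · simp
  calc ((3 * K : ℝ)⁻¹) ^ 2 * ∑ w, boolCombination (tensorIndicator n K) b w ^ 2
      ≤ ((3 * K : ℝ)⁻¹) ^ 2 * (4 * (17 / 15) ^ 2 * (K * K)) := by gcongr
    _ ≤ 1 := by field_simp; norm_num

theorem le_sum_sq_codeword_sub {n K : ℕ} (hK : 256 ^ (K - 1) ≤ n) (b b' : Fin K × Fin K → Bool)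
    (hbb' : K ^ 2 < 4 * hammingDist b b') :
    1 / 64 ≤ ∑ w, (codeword n K b w - codeword n K b' w) ^ 2 := by
  have hbound := le_sum_sq_boolCombination_sub tensorIndicator_nonneg (sum_sq_tensorIndicator hK)
    (sum_sum_tensorIndicator_mul_le hK) b b'
  have hbb'' : (K : ℝ) ^ 2 ≤ 4 * hammingDist b b' := by exact_mod_cast hbb'.le
  simp only [codeword, ← mul_sub, mul_pow, ← mul_sum]
  rcases K.eq_zero_or_pos with rfl | hK0
  · have := hammingDist_le_card_fintype (x := b) (y := b')
    simp only [Fintype.card_prod, Fintype.card_fin] at this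
    omega
  calc (1 / 64 : ℝ) ≤ ((3 * K : ℝ)⁻¹) ^ 2 * ((2 - (17 / 15) ^ 2) * (K ^ 2 / 4)) := by
        field_simp; norm_num
    _ ≤ _ := by gcongr; linarith

theorem exists_monotoneCone2_separated (n K : ℕ) (hK : 256 ^ (K - 1) ≤ n) :
    ∃ S : Finset ((Fin 2 → Fin n) → ℝ), (∀ θ ∈ S, θ ∈ monotoneCone2 n ∧ ∑ w, θ w ^ 2 ≤ 1) ∧
      27 ^ (K ^ 2) ≤ #S ^ 4 * 16 ^ (K ^ 2) ∧
      ∀ θ ∈ S, ∀ θ' ∈ S, θ ≠ θ' → 1 / 64 ≤ ∑ w, (θ w - θ' w) ^ 2 := by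
  classical
  obtain ⟨C, hCsep, hCcard⟩ :=
    exists_hammingDist_separated_card (ι := Fin K × Fin K) (d := K ^ 2 / 4 + 1) (by omega)
  simp only [Fintype.card_prod, Fintype.card_fin, ← sq] at hCcard
  have hsep {b} (hb : b ∈ C) {b'} (hb' : b' ∈ C) (hne : b ≠ b') :
      1 / 64 ≤ ∑ w, (codeword n K b w - codeword n K b' w) ^ 2 :=
    le_sum_sq_codeword_sub hK b b' (by have := hCsep b hb b' hb' hne; omega)
  have hinj : Set.InjOn (codeword n K) C := fun b hb b' hb' heq => by
    by_contra hne
    have := hsep hb hb' hne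
    norm_num [heq] at this
  refine ⟨C.image (codeword n K), ?_, ?_, ?_⟩
  · simp only [mem_image]
    rintro _ ⟨b, -, rfl⟩
    exact ⟨codeword_mem_monotoneCone2 n K b, sum_sq_codeword_le hK b⟩
  · rw [card_image_of_injOn hinj]
    exact twentySeven_pow_le_of_two_pow_mul_le (by omega) hCcard
  · simp only [mem_image]
    rintro _ ⟨b, hb, rfl⟩ _ ⟨b', hb', rfl⟩ hne
    exact hsep hb hb' fun h => hne (h ▸ rfl)

theorem exp_mul_log_sq_le {n K N : ℕ} (hn : n < 256 ^ K)
    (hN : 27 ^ (K ^ 2) ≤ N ^ 4 * 16 ^ (K ^ 2)) :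
    Real.exp (1 / 2000 * Real.log ((n ^ 2 : ℕ) : ℝ) ^ 2) ≤ N := by
  have hlog_sq : Real.log ((n ^ 2 : ℕ) : ℝ) = 2 * Real.log n := by
    rw [Nat.cast_pow, Real.log_pow, Nat.cast_ofNat]
  have hlog_n : Real.log n ≤ K * (8 * Real.log 2) := by
    rcases n.eq_zero_or_pos with rfl | hn0
    · simp only [CharP.cast_eq_zero, Real.log_zero]; positivity
    calc Real.log n ≤ Real.log ((2 : ℝ) ^ (8 * K)) :=
          Real.log_le_log (by positivity) (by rw [pow_mul]; exact_mod_cast hn.le)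
      _ = K * (8 * Real.log 2) := by rw [Real.log_pow]; push_cast; ring
  have hlog_n_sq : Real.log n ^ 2 ≤ 32 * K ^ 2 := by
    have hsq := pow_le_pow_left₀ (Real.log_natCast_nonneg n) hlog_n 2
    have hlog_two : Real.log 2 ^ 2 ≤ 1 / 2 := by
      nlinarith [Real.log_two_lt_d9, Real.log_pos one_lt_two]
    nlinarith [mul_le_mul_of_nonneg_left hlog_two (sq_nonneg (K : ℝ))]
  have hlog_ratio : (11 / 27 : ℝ) ≤ Real.log (27 / 16) := by
    have := Real.one_sub_inv_le_log_of_pos (x := 27 / 16) (by norm_num)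
    norm_num at this ⊢
    linarith
  have hratio : (27 / 16 : ℝ) ^ (K ^ 2) ≤ (N : ℝ) ^ 4 := by
    rw [div_pow, div_le_iff₀ (by positivity)]
    exact_mod_cast hN
  rw [← pow_le_pow_iff_left₀ (Real.exp_nonneg _) (Nat.cast_nonneg N) four_ne_zero]
  calc Real.exp (1 / 2000 * Real.log ((n ^ 2 : ℕ) : ℝ) ^ 2) ^ 4
      = Real.exp (4 * (1 / 2000 * (2 * Real.log n) ^ 2)) := by
        rw [hlog_sq, ← Real.exp_nat_mul, Nat.cast_ofNat]
    _ ≤ Real.exp ((K ^ 2 : ℕ) * Real.log (27 / 16)) := by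
        refine Real.exp_le_exp.2 ?_
        push_cast
        nlinarith [mul_le_mul_of_nonneg_left hlog_ratio (sq_nonneg (K : ℝ))]
    _ = (27 / 16 : ℝ) ^ (K ^ 2) := by rw [Real.exp_nat_mul, Real.exp_log (by norm_num)]
    _ ≤ (N : ℝ) ^ 4 := hratio

/-- there are universal constants `c, ε0 > 0` such that for every `n1 ≥ 2` with
`n = n1²`, the set `M(L_{2,n}) ∩ B₂(1)` contains an `ε0`-separated subset of cardinality at
least `exp(c (log n)²)`; in particular every `ε0`-covering of `M(L_{2,n}) ∩ B₂(1)` has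
cardinality at least `exp(c (log n)²)`. -/
theorem stmt17 :
    ∃ c ε0 : ℝ, 0 < c ∧ 0 < ε0 ∧ ∀ n1 : ℕ, 2 ≤ n1 →
      (∃ S : Finset ((Fin 2 → Fin n1) → ℝ),
        (∀ θ ∈ S, θ ∈ monotoneCone2 n1 ∧ ∑ w, θ w ^ 2 ≤ 1) ∧
        Real.exp (c * Real.log ((n1 ^ 2 : ℕ) : ℝ) ^ 2) ≤ (S.card : ℝ) ∧
        ∀ θ ∈ S, ∀ θ' ∈ S, θ ≠ θ' → ε0 ≤ Real.sqrt (∑ w, (θ w - θ' w) ^ 2)) ∧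
      (∀ T : Finset ((Fin 2 → Fin n1) → ℝ),
        (∀ θ ∈ monotoneCone2 n1, (∑ w, θ w ^ 2 ≤ 1) →
          ∃ t ∈ T, Real.sqrt (∑ w, (θ w - t w) ^ 2) ≤ ε0) →
        Real.exp (c * Real.log ((n1 ^ 2 : ℕ) : ℝ) ^ 2) ≤ (T.card : ℝ)) := by
  refine ⟨1 / 2000, 1 / 20, by norm_num, by norm_num, fun n1 hn1 => ?_⟩
  obtain ⟨S, hS, hcard, hsep⟩ := exists_monotoneCone2_separated n1 (Nat.log 256 n1 + 1)
    (Nat.pow_log_le_self 256 (by omega))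
  have hexp := exp_mul_log_sq_le (Nat.lt_pow_succ_log_self (by norm_num) n1) hcard
  have hsep' : ∀ θ ∈ S, ∀ θ' ∈ S, θ ≠ θ' → 1 / 8 ≤ √(∑ w, (θ w - θ' w) ^ 2) :=
    fun θ hθ θ' hθ' hne => Real.le_sqrt_of_sq_le (by linarith [hsep θ hθ θ' hθ' hne])
  refine ⟨⟨S, hS, hexp, fun θ hθ θ' hθ' hne => by linarith [hsep' θ hθ θ' hθ' hne]⟩,
    fun T hT => hexp.trans ?_⟩
  exact_mod_cast card_le_card_of_separated_of_covers hsep'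
    (fun θ hθ => hT θ (hS θ hθ).1 (hS θ hθ).2) (by norm_num)

end
end
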